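/- arXiv:2002.01297 — 2 statements merged into one kernel-verified Lean document; each statement's English description precedes it below -/
import Mathlib

section
/- For every integer t ≥ 2 there exists n₀ ∈ ℕ such that for all integers n > n₀, IR(K_{t,t}, K_{1,n}) ≤ n + 10·n^{1 − 1/(2t)}. -/
open SimpleGraph

def ArrowsInd {V α β : Type*} (F : SimpleGraph V) (H : SimpleGraph α) (G : SimpleGraph β) : Prop :=
  ∀ c : Sym2 V → Bool,
    (∃ f : H ↪g F, ∀ u v, H.Adj u v → c s(f u, f v) = true) ∨
    (∃ g : G ↪g F, ∀ u v, G.Adj u v → c s(g u, g v) = false)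

noncomputable def IR {α β : Type*} (H : SimpleGraph α) (G : SimpleGraph β) : ℕ :=
  sInf {N : ℕ | ∃ F : SimpleGraph (Fin N), ArrowsInd F H G}

def StarGraph (n : ℕ) : SimpleGraph (Fin 1 ⊕ Fin n) := completeBipartiteGraph (Fin 1) (Fin n)

open Finset

/-!
Take `F = K_{K, n + K}` with `K = ⌈n ^ (1 - 1/(2t))⌉`; both sides of `F` are independent, so
every complete bipartite subgraph with one part on each side is induced. If no vertex `p` of the
small side has `n` blue edges (a blue `K_{1,n}`), each has at least `K` red edges, so the red
neighbourhoods `D q` of the `n + K` vertices `q` of the large side have average size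
`a ≈ K² / n ≈ n ^ (1 - 1/t)`. By convexity of `d ↦ d.choose t` they contain at least
`(n + K) · a.choose t ≈ n ^ t / t!` pairs `(q, T)` with `T ⊆ D q`, `#T = t`, more than
`(t - 1) · K.choose t ≈ n ^ (t - 1/2) / t!`; so some `t`-set `T` lies in `t` of the `D q`,
which is a red `K_{t,t}`. Writing `n = y ^ (2t)` turns all estimates into polynomial ones in `y`.
-/

variable {α β γ δ ι V W : Type*}

lemma ArrowsInd.of_iso {F : SimpleGraph V} {F' : SimpleGraph W} {H : SimpleGraph α}
    {G : SimpleGraph β} (h : ArrowsInd F H G) (e : F ≃g F') : ArrowsInd F' H G := by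
  intro c
  rcases h (c ∘ Sym2.map e) with ⟨f, hf⟩ | ⟨g, hg⟩
  · exact .inl ⟨e.toEmbedding.comp f, fun u v huv => by simpa using hf u v huv⟩
  · exact .inr ⟨e.toEmbedding.comp g, fun u v huv => by simpa using hg u v huv⟩

lemma IR_le_card [Fintype V] {F : SimpleGraph V} {H : SimpleGraph α} {G : SimpleGraph β}
    (h : ArrowsInd F H G) : IR H G ≤ Fintype.card V :=
  Nat.sInf_le ⟨_, h.of_iso (F.overFinIso rfl)⟩

def completeBipartiteGraphEmbedding (f : α ↪ γ) (g : β ↪ δ) :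
    completeBipartiteGraph α β ↪g completeBipartiteGraph γ δ where
  toEmbedding := f.sumMap g
  map_rel_iff' := by rintro (a | a) (b | b) <;> simp

lemma exists_completeBipartiteGraph_embedding_forall_color [Fintype α] [Fintype β]
    (c : Sym2 (γ ⊕ δ) → Bool) (b : Bool) {S : Finset γ} {U : Finset δ}
    (hS : Fintype.card α ≤ #S) (hU : Fintype.card β ≤ #U)
    (hc : ∀ x ∈ S, ∀ y ∈ U, c s(.inl x, .inr y) = b) :
    ∃ e : completeBipartiteGraph α β ↪g completeBipartiteGraph γ δ,
      ∀ u v, (completeBipartiteGraph α β).Adj u v → c s(e u, e v) = b := by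
  obtain ⟨f, hf⟩ := Function.Embedding.exists_of_card_le_finset hS
  obtain ⟨g, hg⟩ := Function.Embedding.exists_of_card_le_finset hU
  have hfg i j : c s(.inl (f i), .inr (g j)) = b := hc _ (hf ⟨i, rfl⟩) _ (hg ⟨j, rfl⟩)
  refine ⟨completeBipartiteGraphEmbedding f g, ?_⟩
  rintro (i | i) (j | j) h <;> simp_all [completeBipartiteGraphEmbedding, Sym2.eq_swap]

lemma choose_succ_add_le (x k t : ℕ) :
    (x + k).choose (t + 1) ≤ x.choose (t + 1) + k * (x + k).choose t := by
  induction k with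
  | zero => simp
  | succ k ih =>
    have hmono : (x + k).choose t ≤ (x + k + 1).choose t := Nat.choose_le_succ _ _
    rw [← add_assoc, Nat.choose_succ_succ']
    nlinarith

lemma le_choose_succ_add (x k t : ℕ) :
    x.choose (t + 1) + k * x.choose t ≤ (x + k).choose (t + 1) := by
  induction k with
  | zero => simp
  | succ k ih =>
    have hmono : x.choose t ≤ (x + k).choose t := Nat.choose_le_choose _ (by omega)
    rw [← add_assoc, Nat.choose_succ_succ']
    nlinarith

/-- Convexity of `d ↦ d.choose (t + 1)`: it lies above its line through `a` of slope
`a.choose t`. -/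
lemma choose_succ_add_mul_le (a d t : ℕ) :
    a.choose (t + 1) + a.choose t * d ≤ d.choose (t + 1) + a.choose t * a := by
  rcases le_total a d with h | h
  · obtain ⟨k, rfl⟩ := Nat.exists_eq_add_of_le h
    nlinarith [le_choose_succ_add a k t]
  · obtain ⟨k, rfl⟩ := Nat.exists_eq_add_of_le h
    nlinarith [choose_succ_add_le d k t]

lemma card_mul_choose_le_sum_choose (s : Finset ι) (d : ι → ℕ) {a : ℕ}
    (h : #s * a ≤ ∑ i ∈ s, d i) (t : ℕ) :
    #s * a.choose t ≤ ∑ i ∈ s, (d i).choose t := by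
  cases t with
  | zero => simp
  | succ t =>
    have tangent := sum_le_sum fun i (_ : i ∈ s) => choose_succ_add_mul_le a (d i) t
    simp only [sum_add_distrib, ← mul_sum, sum_const, smul_eq_mul] at tangent
    nlinarith

lemma sum_choose_card_eq_sum_card_filter_subset [Fintype α] [DecidableEq α]
    (s : Finset β) (D : β → Finset α) (t : ℕ) :
    ∑ b ∈ s, (#(D b)).choose t = ∑ T ∈ powersetCard t univ, #{b ∈ s | T ⊆ D b} := by
  refine (sum_congr rfl fun b _ => ?_).trans
    (sum_card_bipartiteAbove_eq_sum_card_bipartiteBelow fun b T => T ⊆ D b)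
  rw [← card_powersetCard, bipartiteAbove]
  congr 1
  ext T
  simp [mem_powersetCard, and_comm]

lemma exists_card_eq_le_card_filter_subset [Fintype α] [DecidableEq α]
    (s : Finset β) (D : β → Finset α) {t : ℕ}
    (h : (Fintype.card α).choose t * (t - 1) < ∑ b ∈ s, (#(D b)).choose t) :
    ∃ T : Finset α, #T = t ∧ t ≤ #{b ∈ s | T ⊆ D b} := by
  rw [sum_choose_card_eq_sum_card_filter_subset, ← card_univ, ← card_powersetCard,
    ← smul_eq_mul, ← sum_const] at h
  obtain ⟨T, hT, hlt⟩ := exists_lt_of_sum_lt h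
  exact ⟨T, (mem_powersetCard.1 hT).2, by omega⟩

theorem arrowsInd_completeBipartiteGraph [Fintype V] [Fintype W] {t n a : ℕ}
    (hdeg : Fintype.card W * a ≤ Fintype.card V * (Fintype.card W - n))
    (hcount : (Fintype.card V).choose t * (t - 1) < Fintype.card W * a.choose t) :
    ArrowsInd (completeBipartiteGraph V W) (completeBipartiteGraph (Fin t) (Fin t))
      (StarGraph n) := by
  classical
  intro c
  set red : V → W → Prop := fun p q => c s(.inl p, .inr q) = true
  by_cases hblue : ∃ p, n ≤ #{q | ¬ red p q}
  · obtain ⟨p, hp⟩ := hblue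
    refine .inr (exists_completeBipartiteGraph_embedding_forall_color c false
      (S := {p}) (by simp) (by simpa using hp) ?_)
    simp_all [red]
  push Not at hblue
  have hred p : Fintype.card W - n ≤ #(univ.bipartiteAbove red p) := by
    have hsplit : #{q | red p q} + #{q | ¬ red p q} = Fintype.card W :=
      card_filter_add_card_filter_not _
    have := hblue p
    unfold bipartiteAbove
    omega
  have hsum : Fintype.card W * a ≤ ∑ q, #(univ.bipartiteBelow red q) := by
    rw [← sum_card_bipartiteAbove_eq_sum_card_bipartiteBelow]
    calc Fintype.card W * a ≤ Fintype.card V * (Fintype.card W - n) := hdeg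
      _ = #(univ : Finset V) • (Fintype.card W - n) := by rw [card_univ, smul_eq_mul]
      _ ≤ ∑ p, #(univ.bipartiteAbove red p) := card_nsmul_le_sum _ _ _ fun p _ => hred p
  obtain ⟨T, hT, hTU⟩ := exists_card_eq_le_card_filter_subset univ
    (fun q => univ.bipartiteBelow red q)
    (hcount.trans_le (card_mul_choose_le_sum_choose _ _ hsum t))
  refine .inl (exists_completeBipartiteGraph_embedding_forall_color c true
    (S := T) (U := {q | T ⊆ univ.bipartiteBelow red q}) (by simp [hT]) (by simpa using hTU) ?_)
  intro x hx y hy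
  simpa [red] using (mem_filter.1 hy).2 hx

open Nat in
lemma choose_mul_lt_mul_choose_of_pow_lt {K N a t : ℕ}
    (h : ((t - 1 : ℕ) : ℝ) * K ^ t < N * ((a + 1 - t : ℕ) : ℝ) ^ t) :
    K.choose t * (t - 1) < N * a.choose t := by
  have hK := Nat.choose_le_pow_div (α := ℝ) t K
  have ha := Nat.pow_le_choose (α := ℝ) t a
  have : (K.choose t * (t - 1 : ℕ) : ℝ) < N * a.choose t :=
    calc (K.choose t * (t - 1 : ℕ) : ℝ) ≤ K ^ t / t ! * (t - 1 : ℕ) := by gcongr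
      _ = (t - 1 : ℕ) * K ^ t / t ! := by ring
      _ < N * ((a + 1 - t : ℕ) : ℝ) ^ t / t ! := by gcongr
      _ = N * (((a + 1 - t : ℕ) : ℝ) ^ t / t !) := by ring
      _ ≤ N * a.choose t := by gcongr
  exact_mod_cast this

lemma sub_one_mul_eight_pow_lt_pow {t : ℕ} {y : ℝ} (ht : 1 ≤ t) (hy : 8 * t ≤ y) :
    ((t - 1 : ℕ) : ℝ) * 8 ^ t < y ^ t := by
  have hsub : ((t - 1 : ℕ) : ℝ) < t := by rw [Nat.cast_sub ht]; simp
  calc ((t - 1 : ℕ) : ℝ) * 8 ^ t < (t : ℝ) ^ t * 8 ^ t := by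
        gcongr
        exact hsub.trans_le (le_self_pow₀ (by exact_mod_cast ht) (by omega))
    _ = (8 * t) ^ t := by ring
    _ ≤ y ^ t := by gcongr

theorem arrowsInd_of_eq_pow {t n : ℕ} (ht : 2 ≤ t) {y : ℝ} (hy : 8 * t ≤ y)
    (hn : (n : ℝ) = y ^ (2 * t)) :
    ArrowsInd
      (completeBipartiteGraph (Fin ⌈y ^ (2 * t - 1)⌉₊) (Fin (n + ⌈y ^ (2 * t - 1)⌉₊)))
      (completeBipartiteGraph (Fin t) (Fin t)) (StarGraph n) := by
  set z := y ^ (2 * t - 2)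
  set K := ⌈y ^ (2 * t - 1)⌉₊
  -- `z / 2 = y ^ (4t - 2) / (2n)` bounds the average red degree `K² / (n + K)` from below
  set a := ⌊z / 2⌋₊
  have ht' : (2 : ℝ) ≤ t := by exact_mod_cast ht
  have hy2 : 2 ≤ y := by linarith
  have hy1 : 1 ≤ y := by linarith
  have hz : y ≤ z := le_self_pow₀ hy1 (by omega)
  have hw : y ^ (2 * t - 1) = z * y := by rw [← pow_succ]; congr 1; omega
  have hn' : (n : ℝ) = z * y * y := by rw [hn, ← pow_succ, ← pow_succ]; congr 1; omega
  have hnt : (n : ℝ) = y ^ t * y ^ t := by rw [hn, ← pow_add]; congr 1; ring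
  have hK1 : z * y ≤ K := hw ▸ Nat.le_ceil _
  have hK2 : (K : ℝ) ≤ 2 * (z * y) := hw ▸ Nat.ceil_le_two_mul (by nlinarith)
  have ha1 : (a : ℝ) ≤ z / 2 := Nat.floor_le (by positivity)
  have ha2 : z / 2 < a + 1 := Nat.lt_floor_add_one _
  apply arrowsInd_completeBipartiteGraph (a := a)
  · simp only [Fintype.card_fin, Nat.add_sub_cancel_left]
    have hKn : (K : ℝ) ≤ n := by
      rw [hn']; nlinarith [mul_le_mul_of_nonneg_left hy2 (by positivity : 0 ≤ z * y)]
    have : ((n + K) * a : ℝ) ≤ K * K :=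
      calc ((n + K) * a : ℝ) ≤ (2 * n) * (z / 2) := by gcongr; linarith
        _ = (z * y) * (z * y) := by rw [hn']; ring
        _ ≤ K * K := by gcongr
    exact_mod_cast this
  · simp only [Fintype.card_fin]
    apply choose_mul_lt_mul_choose_of_pow_lt
    have hta : t ≤ a + 1 := by
      have : (t : ℝ) < a + 1 := by linarith
      exact_mod_cast this.le
    have hat : z / 4 ≤ ((a + 1 - t : ℕ) : ℝ) := by
      rw [Nat.cast_sub hta]; push_cast; linarith
    calc ((t - 1 : ℕ) : ℝ) * K ^ t ≤ (t - 1 : ℕ) * (2 * (z * y)) ^ t := by gcongr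
      _ = ((t - 1 : ℕ) * 8 ^ t) * y ^ t * (z / 4) ^ t := by
        rw [show 2 * (z * y) = 8 * y * (z / 4) by ring, mul_pow, mul_pow]; ring
      _ < y ^ t * y ^ t * (z / 4) ^ t := by
        gcongr
        exact sub_one_mul_eight_pow_lt_pow (by omega) hy
      _ = n * (z / 4) ^ t := by rw [hnt]
      _ ≤ ((n + K : ℕ) : ℝ) * ((a + 1 - t : ℕ) : ℝ) ^ t := by
        push_cast; gcongr; linarith [(K.cast_nonneg : (0 : ℝ) ≤ K)]

theorem IR_le_add_four_mul_pow {t n : ℕ} (ht : 2 ≤ t) {y : ℝ} (hy : 8 * t ≤ y)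
    (hn : (n : ℝ) = y ^ (2 * t)) :
    (IR (completeBipartiteGraph (Fin t) (Fin t)) (StarGraph n) : ℝ)
      ≤ n + 4 * y ^ (2 * t - 1) := by
  have hy1 : 1 ≤ y := by
    have : (2 : ℝ) ≤ t := by exact_mod_cast ht
    linarith
  have hK : (⌈y ^ (2 * t - 1)⌉₊ : ℝ) ≤ 2 * y ^ (2 * t - 1) :=
    Nat.ceil_le_two_mul (by linarith [one_le_pow₀ (n := 2 * t - 1) hy1])
  have hIR := IR_le_card (arrowsInd_of_eq_pow ht hy hn)
  rw [Fintype.card_sum, Fintype.card_fin, Fintype.card_fin] at hIR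
  have hIR' : (IR (completeBipartiteGraph (Fin t) (Fin t)) (StarGraph n) : ℝ)
      ≤ ⌈y ^ (2 * t - 1)⌉₊ + (n + ⌈y ^ (2 * t - 1)⌉₊) := by exact_mod_cast hIR
  linarith

/-- for t ≥ 2 and all sufficiently large n,
IR(K_{t,t}, K_{1,n}) ≤ n + 10·n^{1 − 1/(2t)}. -/
theorem IR_Ktt_upper (t : ℕ) (ht : 2 ≤ t) :
    ∃ n₀ : ℕ, ∀ n : ℕ, n₀ < n →
      (IR (completeBipartiteGraph (Fin t) (Fin t)) (StarGraph n) : ℝ)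
        ≤ n + 10 * (n : ℝ) ^ ((1 : ℝ) - 1 / (2 * (t : ℝ))) := by
  refine ⟨(8 * t) ^ (2 * t), fun n hn => ?_⟩
  set y := (n : ℝ) ^ (1 / (2 * (t : ℝ)))
  have hn0 : (0 : ℝ) < n := by exact_mod_cast (Nat.zero_le _).trans_lt hn
  have hn_pow : (n : ℝ) = y ^ (2 * t) := by
    rw [← Real.rpow_natCast, ← Real.rpow_mul hn0.le, Nat.cast_mul, Nat.cast_ofNat,
      one_div_mul_cancel (by positivity), Real.rpow_one]
  have hy : 8 * t ≤ y := by
    have : ((8 * t : ℕ) : ℝ) ^ (2 * t) < y ^ (2 * t) := by rw [← hn_pow]; exact_mod_cast hn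
    exact_mod_cast (lt_of_pow_lt_pow_left₀ _ (by positivity) this).le
  have hy_pos : 0 < y := by positivity
  have hrpow : (n : ℝ) ^ ((1 : ℝ) - 1 / (2 * (t : ℝ))) = y ^ (2 * t - 1) := by
    rw [Real.rpow_sub hn0, Real.rpow_one]
    change (n : ℝ) / y = _
    rw [hn_pow, show 2 * t = 2 * t - 1 + 1 by omega, pow_succ, Nat.add_sub_cancel,
      mul_div_cancel_right₀ _ hy_pos.ne']
  rw [hrpow]
  linarith [IR_le_add_four_mul_pow ht hy hn_pow, pow_pos hy_pos (2 * t - 1)]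
end

section
/- For every graph H with at least one edge and every positive integer n, IR(H, K_{1,n}) ≥ n·(χ(H) − 1) + 1, where χ(H) is the chromatic number of H. -/
/-!
If `N ≤ n (χ(H) - 1)`, split the vertices of `Fin N` into `χ(H) - 1` blocks of at most `n`
vertices and colour an edge blue inside a block and red across blocks. A red copy of `H` would be
properly coloured by its blocks, and a blue `K_{1,n}` would put `n + 1` vertices into one block.

The bound is not vacuous because `IR` is an `sInf` (`sInf ∅ = 0`), so an arrowing graph is needed:
blow every vertex of `H` up into an independent set of `|H| n + 1` vertices. Unless there is an
induced blue star, every vertex has fewer than `n` blue edges into each neighbouring class, so a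
transversal with only red edges can be chosen greedily.
-/

open SimpleGraph

open Finset

theorem ArrowsInd.of_embedding {V W α β : Type*} {F : SimpleGraph V} {F' : SimpleGraph W}
    {H : SimpleGraph α} {G : SimpleGraph β} (e : F ↪g F') (h : ArrowsInd F H G) :
    ArrowsInd F' H G := by
  intro c
  rcases h (fun s => c (s.map e)) with ⟨f, hf⟩ | ⟨g, hg⟩
  · exact Or.inl ⟨e.comp f, fun u v huv => by simpa using hf u v huv⟩
  · exact Or.inr ⟨e.comp g, fun u v huv => by simpa using hg u v huv⟩

theorem not_arrowsInd_of_card_fiber_le {V α ι : Type*} [Fintype V] [DecidableEq ι]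
    (F : SimpleGraph V) {H : SimpleGraph α} (hH : IsEmpty (H.Coloring ι)) {n : ℕ}
    (φ : V → ι) (hφ : ∀ i, #{v | φ v = i} ≤ n) : ¬ ArrowsInd F H (StarGraph n) := by
  intro hF
  let c : Sym2 V → Bool :=
    Sym2.lift ⟨fun u v => decide (φ u ≠ φ v), fun u v => by simp [ne_comm]⟩
  rcases hF c with ⟨f, hf⟩ | ⟨g, hg⟩
  · refine hH.false (Coloring.mk (φ ∘ f) fun {u v} huv => ?_)
    simpa [c] using hf u v huv
  · have hfiber : ∀ x, φ (g x) = φ (g (.inl 0)) := by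
      rintro (x | x)
      · rw [Subsingleton.elim x 0]
      · exact .symm <| by simpa [c] using hg (.inl 0) (.inr x) (by simp [StarGraph])
    have := calc n + 1 = #(univ : Finset (Fin 1 ⊕ Fin n)) := by simp [add_comm]
      _ ≤ #{v | φ v = φ (g (.inl 0))} :=
        card_le_card_of_injOn g (fun x _ => by simp [hfiber x]) g.injective.injOn
      _ ≤ n := hφ _
    omega

theorem exists_card_fiber_le {N m n : ℕ} (hN : N ≤ n * m) :
    ∃ φ : Fin N → Fin m, ∀ i, #{v | φ v = i} ≤ n := by
  let e : Fin N → Fin m × Fin n := fun v => finProdFinEquiv.symm (Fin.castLE (by lia) v)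
  have he : e.Injective := finProdFinEquiv.symm.injective.comp (Fin.castLE_injective _)
  refine ⟨fun v => (e v).1, fun i => ?_⟩
  calc #{v | (e v).1 = i} ≤ #(univ : Finset (Fin n)) :=
        card_le_card_of_injOn (fun v => (e v).2) (fun _ _ => mem_univ _)
          fun v hv w hw h => he (Prod.ext ((mem_filter.1 hv).2.trans (mem_filter.1 hw).2.symm) h)
    _ = n := by simp

theorem exists_starGraph_embedding {V : Type*} {F : SimpleGraph V} {n : ℕ} (w : V)
    (S : Finset V) (hS : n ≤ #S) (hadj : ∀ v ∈ S, F.Adj w v)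
    (hind : ∀ u ∈ S, ∀ v ∈ S, ¬ F.Adj u v) :
    ∃ g : StarGraph n ↪g F, g (.inl 0) = w ∧ ∀ t, g (.inr t) ∈ S := by
  let e : Fin n ↪ V :=
    (Fin.castLEEmb hS).trans (S.equivFin.symm.toEmbedding.trans (Function.Embedding.subtype _))
  have he : ∀ t, e t ∈ S := fun t => Subtype.property _
  have hw : ∀ t, w ≠ e t := fun t => (hadj _ (he t)).ne
  have hinj : Function.Injective (Sum.elim (fun _ : Fin 1 => w) e) := by
    rintro (x | x) (y | y) hxy
    · rw [Subsingleton.elim x y]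
    · exact absurd hxy (hw y)
    · exact absurd hxy.symm (hw x)
    · exact congrArg _ (e.injective hxy)
  refine ⟨⟨⟨_, hinj⟩, fun {x y} => ?_⟩, rfl, he⟩
  change F.Adj (Sum.elim (fun _ => w) e x) (Sum.elim (fun _ => w) e y) ↔ _
  rcases x with x | x <;> rcases y with y | y
  · simp [StarGraph]
  · simpa [StarGraph] using hadj _ (he y)
  · simpa [StarGraph] using (hadj _ (he x)).symm
  · simpa [StarGraph] using hind _ (he x) _ (he y)

section Blowup

variable {α : Type*} {H : SimpleGraph α} {m n : ℕ} (c : Sym2 (α × Fin m) → Bool)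

theorem card_blue_lt_of_not_blueStar
    (hc : ¬ ∃ g : StarGraph n ↪g H.comap Prod.fst,
      ∀ u v, (StarGraph n).Adj u v → c s(g u, g v) = false)
    {w : α × Fin m} {a : α} (hwa : H.Adj w.1 a) : #{j | c s(w, (a, j)) = false} < n := by
  by_contra! hn
  obtain ⟨g, hg₀, hgS⟩ := exists_starGraph_embedding (F := H.comap Prod.fst) w
    (({j | c s(w, (a, j)) = false} : Finset (Fin m)).map (Function.Embedding.sectR a _))
    (by simpa using hn) (by simp [hwa]) (by simp)
  refine hc ⟨g, ?_⟩
  have hblue : ∀ t, c s(g (.inl 0), g (.inr t)) = false := fun t => by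
    obtain ⟨j, hj, hjt⟩ := mem_map.1 (hgS t)
    simpa [hg₀, ← hjt] using hj
  rintro (x | x) (y | y) hxy
  · simp [StarGraph] at hxy
  · simpa [Subsingleton.elim x 0] using hblue y
  · simpa [Subsingleton.elim y 0, Sym2.eq_swap] using hblue x
  · simp [StarGraph] at hxy

theorem exists_red_extension [Fintype α]
    (hblue : ∀ w a, H.Adj w.1 a → #{j | c s(w, (a, j)) = false} ≤ n)
    (hm : Fintype.card α * n < m) (p : α → Fin m) (a : α) :
    ∃ j, ∀ u, H.Adj u a → c s((u, p u), (a, j)) = true := by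
  classical
  let bad := univ.biUnion fun u => ({j | H.Adj u a ∧ c s((u, p u), (a, j)) = false} : Finset _)
  have hbad : #bad < #(univ : Finset (Fin m)) := by
    refine lt_of_le_of_lt (card_biUnion_le_card_mul _ _ n fun u _ => ?_) (by simpa using hm)
    by_cases hua : H.Adj u a
    · simpa [hua] using hblue (u, p u) a hua
    · simp [hua]
  obtain ⟨j, -, hj⟩ := exists_mem_notMem_of_card_lt_card hbad
  exact ⟨j, fun u hua => by_contra fun h =>
    hj (mem_biUnion.2 ⟨u, mem_univ _, by simpa [hua] using h⟩)⟩

theorem exists_red_transversal [Fintype α]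
    (hblue : ∀ w a, H.Adj w.1 a → #{j | c s(w, (a, j)) = false} ≤ n)
    (hm : Fintype.card α * n < m) :
    ∃ p : α → Fin m, ∀ u v, H.Adj u v → c s((u, p u), (v, p v)) = true := by
  classical
  suffices ∀ s : Finset α, ∃ p : α → Fin m,
      ∀ u ∈ s, ∀ v ∈ s, H.Adj u v → c s((u, p u), (v, p v)) = true by
    obtain ⟨p, hp⟩ := this univ
    exact ⟨p, fun u v => hp u (mem_univ u) v (mem_univ v)⟩
  intro s
  induction s using Finset.induction_on with
  | empty => exact ⟨fun _ => ⟨0, by lia⟩, by simp⟩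
  | @insert a s ha ih =>
    obtain ⟨p, hp⟩ := ih
    obtain ⟨j, hj⟩ := exists_red_extension c hblue hm p a
    have hupd : ∀ u ∈ s, Function.update p a j u = p u := fun u hu =>
      Function.update_of_ne (ne_of_mem_of_not_mem hu ha) _ _
    refine ⟨Function.update p a j, ?_⟩
    simp only [mem_insert]
    rintro u (rfl | hu) v (rfl | hv) huv
    · exact absurd huv (H.irrefl)
    · rw [Function.update_self, hupd v hv, Sym2.eq_swap]; exact hj v huv.symm
    · rw [Function.update_self, hupd u hu]; exact hj u huv
    · rw [hupd u hu, hupd v hv]; exact hp u hu v hv huv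

end Blowup

theorem arrowsInd_comap_fst {α : Type*} [Fintype α] (H : SimpleGraph α) {m n : ℕ}
    (hm : Fintype.card α * n < m) :
    ArrowsInd (H.comap Prod.fst : SimpleGraph (α × Fin m)) H (StarGraph n) := by
  intro c
  by_cases hc : ∃ g : StarGraph n ↪g H.comap Prod.fst,
      ∀ u v, (StarGraph n).Adj u v → c s(g u, g v) = false
  · exact .inr hc
  obtain ⟨p, hp⟩ := exists_red_transversal c
    (fun _ _ hwa => (card_blue_lt_of_not_blueStar c hc hwa).le) hm
  exact .inl ⟨⟨⟨fun u => (u, p u), fun u v h => congrArg Prod.fst h⟩, Iff.rfl⟩, hp⟩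

theorem exists_arrowsInd_fin {α : Type*} [Fintype α] (H : SimpleGraph α) (n : ℕ) :
    ∃ N, ∃ F : SimpleGraph (Fin N), ArrowsInd F H (StarGraph n) := by
  let e := Fintype.equivFin (α × Fin (Fintype.card α * n + 1))
  exact ⟨_, _, (arrowsInd_comap_fst H (Nat.lt_succ_self _)).of_embedding
    (Iso.comap e.symm (H.comap Prod.fst)).symm.toEmbedding⟩

theorem IR_lower_chromatic_general (k : ℕ) (H : SimpleGraph (Fin k)) (hedge : ∃ u v, H.Adj u v)
    (n : ℕ) (r : ℕ) (hr : H.chromaticNumber = r) :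
    n * (r - 1) + 1 ≤ IR H (StarGraph n) := by
  obtain ⟨u, v, huv⟩ := hedge
  have hH : ¬ H.Colorable (r - 1) := fun hcol => by
    have h2 := hr ▸ two_le_chromaticNumber_of_adj huv
    have hle := hr ▸ hcol.chromaticNumber_le
    norm_cast at h2 hle
    lia
  refine le_csInf (exists_arrowsInd_fin H n) fun N ⟨F, hF⟩ => ?_
  by_contra! hN
  obtain ⟨φ, hφ⟩ := exists_card_fiber_le (Nat.lt_succ_iff.1 hN)
  exact not_arrowsInd_of_card_fiber_le F (not_nonempty_iff.1 hH) φ hφ hF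

/-- IR(H, K_{1,n}) ≥ n·(χ(H) − 1) + 1 for H with at least one edge. -/
theorem IR_lower_chromatic (k : ℕ) (H : SimpleGraph (Fin k)) (hedge : ∃ u v, H.Adj u v)
    (n : ℕ) (hn : 0 < n) (r : ℕ) (hr : H.chromaticNumber = r) :
    n * (r - 1) + 1 ≤ IR H (StarGraph n) :=
  IR_lower_chromatic_general k H hedge n r hr
end
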